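/- arXiv:2309.03129 — 4 statements merged into one kernel-verified Lean document; each statement's English description precedes it below -/
import Mathlib

section
/- Smooth solutions (v,u) of the system v_t + u_x = 0, u_t + (uv)_x = u(1−u) with u > 0 satisfy the companion balance law [½v² + u ln u − u + 1]_t + [v u ln u]_x + (u−1) u ln u = 0. -/
open Real

/-- Smooth solutions `(v,u)` of `v_t + u_x = 0`, `u_t + (uv)_x = u(1−u)` with `u > 0`
satisfy the companion balance law
`[½v² + u ln u − u + 1]_t + [v u ln u]_x + (u−1) u ln u = 0`. -/
theorem companion_balance_law (v u : ℝ → ℝ → ℝ)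
    (hv : ContDiff ℝ 1 (fun p : ℝ × ℝ => v p.1 p.2))
    (hu : ContDiff ℝ 1 (fun p : ℝ × ℝ => u p.1 p.2))
    (hupos : ∀ x t : ℝ, 0 < u x t)
    (heq1 : ∀ x t : ℝ, deriv (fun s => v x s) t + deriv (fun y => u y t) x = 0)
    (heq2 : ∀ x t : ℝ, deriv (fun s => u x s) t + deriv (fun y => u y t * v y t) x
      = u x t * (1 - u x t)) :
    ∀ x t : ℝ,
      deriv (fun s => (1/2) * (v x s) ^ 2 + u x s * Real.log (u x s) - u x s + 1) t
      + deriv (fun y => v y t * (u y t * Real.log (u y t))) x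
      + (u x t - 1) * (u x t * Real.log (u x t)) = 0 := by
  intro x t
  have hud := hu.differentiable one_ne_zero
  have hvd := hv.differentiable one_ne_zero
  have hus : Differentiable ℝ (fun s => u x s) :=
    hud.comp ((differentiable_const x).prodMk differentiable_id)
  have hux : Differentiable ℝ (fun y => u y t) :=
    hud.comp (differentiable_id.prodMk (differentiable_const t))
  have hvs : Differentiable ℝ (fun s => v x s) :=
    hvd.comp ((differentiable_const x).prodMk differentiable_id)
  have hvx : Differentiable ℝ (fun y => v y t) :=
    hvd.comp (differentiable_id.prodMk (differentiable_const t))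
  set a := deriv (fun s => v x s) t with ha
  set b := deriv (fun y => u y t) x with hb
  set c := deriv (fun s => u x s) t with hc
  set d := deriv (fun y => v y t) x with hd
  have hva : HasDerivAt (fun s => v x s) a t := (hvs t).hasDerivAt
  have huc : HasDerivAt (fun s => u x s) c t := (hus t).hasDerivAt
  have hub : HasDerivAt (fun y => u y t) b x := (hux x).hasDerivAt
  have hvdx : HasDerivAt (fun y => v y t) d x := (hvx x).hasDerivAt
  have hne := (hupos x t).ne'
  have hlogt : HasDerivAt (fun s => Real.log (u x s)) (c / u x t) t := huc.log hne
  have hlogx : HasDerivAt (fun y => Real.log (u y t)) (b / u x t) x := hub.log hne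
  have h1 : deriv (fun s => (1/2) * (v x s) ^ 2 + u x s * Real.log (u x s) - u x s + 1) t
      = v x t * a + c * Real.log (u x t) := by
    have hD : HasDerivAt (fun s => (1/2) * (v x s) ^ 2 + u x s * Real.log (u x s) - u x s + 1)
        ((1/2) * ((2 : ℕ) * v x t ^ (2 - 1) * a)
          + (c * Real.log (u x t) + u x t * (c / u x t)) - c) t :=
      ((((hva.pow 2).const_mul (1/2 : ℝ)).add (huc.mul hlogt)).sub huc).add_const 1
    rw [hD.deriv]
    field_simp
    ring
  have h2 : deriv (fun y => v y t * (u y t * Real.log (u y t))) x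
      = d * (u x t * Real.log (u x t)) + v x t * (b * Real.log (u x t) + b) := by
    have hD : HasDerivAt (fun y => v y t * (u y t * Real.log (u y t)))
        (d * (u x t * Real.log (u x t))
          + v x t * (b * Real.log (u x t) + u x t * (b / u x t))) x :=
      hvdx.mul (hub.mul hlogx)
    rw [hD.deriv]
    field_simp
  have e1 : a + b = 0 := heq1 x t
  have e2 : c + (b * v x t + u x t * d) = u x t * (1 - u x t) := by
    have h := heq2 x t
    rwa [show deriv (fun y => u y t * v y t) x = b * v x t + u x t * d from (hub.mul hvdx).deriv] at h
  rw [h1, h2]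
  linear_combination v x t * e1 + Real.log (u x t) * e2
end

section
/- If w : ℝ → ℝ is integrable with ∫_ℝ w(x) dx = 0, decays sufficiently fast at ±∞, and ∫_ℝ x² w(x)² dx ≤ σ², then the potential Ψ(x) = ∫_{−∞}^x w(y) dy satisfies ∫_ℝ Ψ(x)² dx ≤ 8σ². -/
open Real MeasureTheory Set
open scoped ENNReal

lemma pointwise_CS (v : ℝ → ℝ) (hv : Measurable v) (hv1 : Integrable v) {x : ℝ} (hx : 0 < x) :
    ENNReal.ofReal ((∫ y in Set.Ioi x, |v y|) ^ 2)
      ≤ (∫⁻ y in Set.Ioi x, ENNReal.ofReal (y ^ ((3:ℝ)/2)) * ENNReal.ofReal (v y ^ 2))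
        * ENNReal.ofReal (2 * x ^ (-(1:ℝ)/2)) := by
  set f : ℝ → ℝ≥0∞ := fun y => ENNReal.ofReal (y ^ ((3:ℝ)/4)) * ENNReal.ofReal |v y| with hf
  set g : ℝ → ℝ≥0∞ := fun y => ENNReal.ofReal (y ^ (-(3:ℝ)/4)) with hg
  have hmf : Measurable f := ((measurable_id.pow measurable_const).ennreal_ofReal.mul
    (hv.abs.ennreal_ofReal))
  have hmg : Measurable g := (measurable_id.pow measurable_const).ennreal_ofReal
  have h1 : ENNReal.ofReal ((∫ y in Ioi x, |v y|) ^ 2)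
      = (∫⁻ y in Ioi x, (f * g) y) ^ 2 := by
    rw [ENNReal.ofReal_pow (by positivity)]
    congr 1
    rw [ofReal_integral_eq_lintegral_ofReal hv1.abs.integrableOn
      (ae_of_all _ fun y => abs_nonneg _)]
    refine setLIntegral_congr_fun measurableSet_Ioi (fun y hy => ?_)
    have hy0 : (0:ℝ) < y := hx.trans hy
    simp only [hf, hg, Pi.mul_apply]
    rw [mul_right_comm, ← ENNReal.ofReal_mul (by positivity), ← Real.rpow_add hy0,
      show (3:ℝ)/4 + -(3:ℝ)/4 = 0 by norm_num, Real.rpow_zero, ENNReal.ofReal_one, one_mul]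
  have hpq : Real.HolderConjugate 2 2 := ⟨by norm_num, by norm_num, by norm_num⟩
  have h2 := ENNReal.lintegral_mul_le_Lp_mul_Lq (volume.restrict (Ioi x)) hpq
    hmf.aemeasurable hmg.aemeasurable
  have hA : (∫⁻ y in Ioi x, f y ^ (2:ℝ))
      = ∫⁻ y in Ioi x, ENNReal.ofReal (y ^ ((3:ℝ)/2)) * ENNReal.ofReal (v y ^ 2) := by
    refine setLIntegral_congr_fun measurableSet_Ioi (fun y hy => ?_)
    have hy0 : (0:ℝ) < y := hx.trans hy
    simp only [hf]
    rw [ENNReal.mul_rpow_of_nonneg _ _ (by norm_num),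
      ENNReal.ofReal_rpow_of_nonneg (by positivity) (by norm_num),
      ENNReal.ofReal_rpow_of_nonneg (abs_nonneg _) (by norm_num)]
    congr 1
    · rw [← Real.rpow_mul hy0.le]; norm_num
    · rw [show (2:ℝ) = ((2:ℕ):ℝ) by norm_num, Real.rpow_natCast, sq_abs]
  have hB : (∫⁻ y in Ioi x, g y ^ (2:ℝ)) = ENNReal.ofReal (2 * x ^ (-(1:ℝ)/2)) := by
    have e1 : (∫⁻ y in Ioi x, g y ^ (2:ℝ))
        = ∫⁻ y in Ioi x, ENNReal.ofReal (y ^ (-(3:ℝ)/2)) := by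
      refine setLIntegral_congr_fun measurableSet_Ioi (fun y hy => ?_)
      have hy0 : (0:ℝ) < y := hx.trans hy
      simp only [hg]
      rw [ENNReal.ofReal_rpow_of_nonneg (by positivity) (by norm_num),
        ← Real.rpow_mul hy0.le]
      norm_num
    rw [e1, ← ofReal_integral_eq_lintegral_ofReal
      (integrableOn_Ioi_rpow_of_lt (by norm_num) hx)
      ((ae_restrict_iff' measurableSet_Ioi).2 (ae_of_all _ fun y hy =>
        Real.rpow_nonneg (hx.trans hy).le _)),
      integral_Ioi_rpow_of_lt (by norm_num) hx]
    congr 1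
    rw [show (-(3:ℝ)/2 + 1) = -(1:ℝ)/2 by norm_num]
    ring
  calc ENNReal.ofReal ((∫ y in Ioi x, |v y|) ^ 2) = (∫⁻ y in Ioi x, (f * g) y) ^ 2 := h1
    _ ≤ ((∫⁻ y in Ioi x, f y ^ (2:ℝ)) ^ ((1:ℝ)/2)
          * (∫⁻ y in Ioi x, g y ^ (2:ℝ)) ^ ((1:ℝ)/2)) ^ 2 := by
        exact pow_le_pow_left' h2 2
    _ = (∫⁻ y in Ioi x, f y ^ (2:ℝ)) * (∫⁻ y in Ioi x, g y ^ (2:ℝ)) := by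
        rw [mul_pow, ← ENNReal.rpow_natCast (_ ^ ((1:ℝ)/2)) 2,
          ← ENNReal.rpow_natCast ((∫⁻ y in Ioi x, g y ^ (2:ℝ)) ^ ((1:ℝ)/2)) 2,
          ← ENNReal.rpow_mul, ← ENNReal.rpow_mul]
        norm_num
    _ = _ := by rw [hA, hB]

lemma hardy_halfline (v : ℝ → ℝ) (hv : Measurable v) (hv1 : Integrable v) :
    ∫⁻ x in Set.Ioi (0:ℝ), ENNReal.ofReal ((∫ y in Set.Ioi x, |v y|) ^ 2)
      ≤ 4 * ∫⁻ y in Set.Ioi (0:ℝ), ENNReal.ofReal (y ^ 2 * v y ^ 2) := by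
  set H : ℝ → ℝ≥0∞ := fun y => ENNReal.ofReal (y ^ ((3:ℝ)/2)) * ENNReal.ofReal (v y ^ 2) with hH
  have hmH : Measurable H := (measurable_id.pow measurable_const).ennreal_ofReal.mul
    ((hv.pow measurable_const).ennreal_ofReal)
  set c : ℝ → ℝ≥0∞ := fun x => ENNReal.ofReal (2 * x ^ (-(1:ℝ)/2)) with hc
  have hmc : Measurable c :=
    (measurable_const.mul (measurable_id.pow measurable_const)).ennreal_ofReal
  have hHne : ∀ y, H y ≠ ⊤ := fun y => ENNReal.mul_ne_top ENNReal.ofReal_ne_top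
    ENNReal.ofReal_ne_top
  have step1 : ∫⁻ x in Ioi (0:ℝ), ENNReal.ofReal ((∫ y in Ioi x, |v y|) ^ 2)
      ≤ ∫⁻ x in Ioi (0:ℝ), (∫⁻ y in Ioi x, H y) * c x :=
    lintegral_mono_ae ((ae_restrict_iff' measurableSet_Ioi).2 (ae_of_all _ fun x hx =>
      pointwise_CS v hv hv1 hx))
  have step2 : ∫⁻ x in Ioi (0:ℝ), (∫⁻ y in Ioi x, H y) * c x
      = ∫⁻ y, ∫⁻ x in Ioi (0:ℝ), (Ioi x).indicator H y * c x := by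
    have e : ∀ x : ℝ, (∫⁻ y in Ioi x, H y) * c x = ∫⁻ y, (Ioi x).indicator H y * c x := by
      intro x
      rw [← lintegral_indicator measurableSet_Ioi,
        ← lintegral_mul_const' _ _ ENNReal.ofReal_ne_top]
    simp_rw [e]
    refine lintegral_lintegral_swap ?_
    have : (Function.uncurry fun x y => (Ioi x).indicator H y * c x)
        = fun p : ℝ × ℝ => (if p.1 < p.2 then H p.2 else 0) * c p.1 := by
      funext p
      simp [Function.uncurry, Set.indicator_apply, mem_Ioi]
    rw [this]
    exact ((Measurable.ite (measurableSet_lt measurable_fst measurable_snd)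
      (hmH.comp measurable_snd) measurable_const).mul (hmc.comp measurable_fst)).aemeasurable
  have step3 : ∀ y : ℝ, (∫⁻ x in Ioi (0:ℝ), (Ioi x).indicator H y * c x)
      ≤ (Ioi (0:ℝ)).indicator (fun y => ENNReal.ofReal (4 * (y ^ 2 * v y ^ 2))) y := by
    intro y
    rcases le_or_gt y 0 with hy | hy
    · have : ∫⁻ x in Ioi (0:ℝ), (Ioi x).indicator H y * c x = 0 := by
        rw [← lintegral_zero (μ := volume.restrict (Ioi (0:ℝ)))]
        refine setLIntegral_congr_fun measurableSet_Ioi (fun x hx => ?_)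
        rw [Set.indicator_of_notMem (by simpa using (hy.trans_lt hx).not_gt), zero_mul]
      simp [this]
    · rw [Set.indicator_of_mem (mem_Ioi.2 hy)]
      have e1 : ∫⁻ x in Ioi (0:ℝ), (Ioi x).indicator H y * c x
          = ∫⁻ x in Ioi (0:ℝ), (Iio y).indicator (fun x => H y * c x) x := by
        refine setLIntegral_congr_fun measurableSet_Ioi (fun x _ => ?_)
        simp only [Set.indicator_apply, mem_Ioi, mem_Iio]
        by_cases h : x < y <;> simp [h]
      have e2 : ∫⁻ x in Ioi (0:ℝ), (Iio y).indicator (fun x => H y * c x) x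
          = ∫⁻ x in Ioo (0:ℝ) y, H y * c x := by
        rw [lintegral_indicator measurableSet_Iio,
          Measure.restrict_restrict measurableSet_Iio, Set.inter_comm, Set.Ioi_inter_Iio]
      have e3 : ∫⁻ x in Ioo (0:ℝ) y, H y * c x
          = H y * ∫⁻ x in Ioo (0:ℝ) y, c x :=
        lintegral_const_mul' _ _ (hHne y)
      have e4 : ∫⁻ x in Ioo (0:ℝ) y, c x = ENNReal.ofReal (4 * y ^ ((1:ℝ)/2)) := by
        have hint : IntegrableOn (fun x : ℝ => 2 * x ^ (-(1:ℝ)/2)) (Ioo 0 y) := by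
          have h0 := (intervalIntegral.intervalIntegrable_rpow' (r := -(1:ℝ)/2)
            (a := 0) (b := y) (by norm_num))
          rw [intervalIntegrable_iff_integrableOn_Ioc_of_le hy.le] at h0
          exact (h0.mono_set Ioo_subset_Ioc_self).const_mul 2
        rw [hc, ← ofReal_integral_eq_lintegral_ofReal hint
          ((ae_restrict_iff' measurableSet_Ioo).2 (ae_of_all _ fun x hx => mul_nonneg (by norm_num) (Real.rpow_nonneg hx.1.le _)))]
        congr 1
        rw [← integral_Ioc_eq_integral_Ioo, ← intervalIntegral.integral_of_le hy.le,
          intervalIntegral.integral_const_mul, integral_rpow (Or.inl (by norm_num)),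
          show (-(1:ℝ)/2 + 1) = 1/2 by norm_num, Real.zero_rpow (by norm_num)]
        ring
      have e5 : H y * ENNReal.ofReal (4 * y ^ ((1:ℝ)/2))
          = ENNReal.ofReal (4 * (y ^ 2 * v y ^ 2)) := by
        have hyy : y ^ ((3:ℝ)/2) * y ^ ((1:ℝ)/2) = y ^ 2 := by
          rw [← Real.rpow_add hy, show (3:ℝ)/2 + 1/2 = ((2:ℕ):ℝ) by norm_num,
            Real.rpow_natCast]
        rw [show H y = ENNReal.ofReal (y ^ ((3:ℝ)/2)) * ENNReal.ofReal (v y ^ 2) from rfl,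
          ← ENNReal.ofReal_mul (by positivity), ← ENNReal.ofReal_mul (by positivity)]
        congr 1
        rw [← hyy]; ring
      rw [e1, e2, e3, e4, e5]
  calc ∫⁻ x in Ioi (0:ℝ), ENNReal.ofReal ((∫ y in Ioi x, |v y|) ^ 2)
      ≤ ∫⁻ y, ∫⁻ x in Ioi (0:ℝ), (Ioi x).indicator H y * c x := step1.trans step2.le
    _ ≤ ∫⁻ y, (Ioi (0:ℝ)).indicator (fun y => ENNReal.ofReal (4 * (y ^ 2 * v y ^ 2))) y :=
        lintegral_mono step3
    _ = 4 * ∫⁻ y in Ioi (0:ℝ), ENNReal.ofReal (y ^ 2 * v y ^ 2) := by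
        rw [lintegral_indicator measurableSet_Ioi]
        simp_rw [ENNReal.ofReal_mul (by norm_num : (0:ℝ) ≤ 4)]
        rw [lintegral_const_mul' _ _ ENNReal.ofReal_ne_top]
        norm_num

lemma cont_Iic (f : ℝ → ℝ) (hf : Integrable f) :
    Continuous fun x => ∫ y in Set.Iic x, f y := by
  have e : (fun x => ∫ y in Set.Iic x, f y)
      = fun x => (∫ y in (0:ℝ)..x, f y) + ∫ y in Set.Iic 0, f y := by
    funext x
    have := intervalIntegral.integral_Iic_sub_Iic (μ := volume) (f := f) (a := (0:ℝ)) (b := x)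
      hf.integrableOn hf.integrableOn
    linarith
  rw [e]
  exact (hf.continuous_primitive 0).add continuous_const

lemma lintegral_Iio_comp_neg (f : ℝ → ℝ≥0∞) (hf : Measurable f) :
    ∫⁻ x in Set.Iio (0:ℝ), f x = ∫⁻ x in Set.Ioi (0:ℝ), f (-x) := by
  have hpre : (Neg.neg : ℝ → ℝ) ⁻¹' Set.Iio (0:ℝ) = Set.Ioi 0 := by
    ext x; simp
  have h1 : volume.restrict (Set.Iio (0:ℝ))
      = Measure.map Neg.neg (volume.restrict (Set.Ioi (0:ℝ))) := by
    conv_lhs => rw [← Measure.map_neg_eq_self (volume : Measure ℝ)]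
    rw [Measure.restrict_map measurable_neg measurableSet_Iio, hpre]
  rw [h1, lintegral_map hf measurable_neg]

/-- If `w ∈ L¹(ℝ)` has zero total mass and finite weighted moment
`∫ x² w(x)² dx ≤ σ²`, then the potential `Ψ(x) = ∫_{−∞}^x w` satisfies
`∫ Ψ² ≤ 8σ²`. -/
theorem potential_L2_bound (w : ℝ → ℝ) (σ : ℝ) (hmeas : Measurable w)
    (hw1 : Integrable w) (hw2 : Integrable (fun x : ℝ => (1 + x ^ 2) * (w x) ^ 2))
    (hmass : ∫ x : ℝ, w x = 0)
    (hmom : ∫ x : ℝ, x ^ 2 * (w x) ^ 2 ≤ σ ^ 2) :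
    ∫ x : ℝ, (∫ y in Set.Iic x, w y) ^ 2 ≤ 8 * σ ^ 2 := by
  have hΨc : Continuous fun x => ∫ y in Set.Iic x, w y := cont_Iic w hw1
  have hw2' : Integrable (fun x : ℝ => x ^ 2 * w x ^ 2) := by
    refine hw2.mono (((measurable_id.pow measurable_const).mul
      (hmeas.pow measurable_const)).aestronglyMeasurable) (ae_of_all _ fun x => ?_)
    rw [Real.norm_eq_abs, Real.norm_eq_abs, abs_of_nonneg (by positivity),
      abs_of_nonneg (by positivity)]
    nlinarith [sq_nonneg (w x), sq_nonneg x]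
  have hσ : 0 ≤ σ ^ 2 := le_trans (integral_nonneg fun x => by positivity) hmom
  -- the reflected function
  set v : ℝ → ℝ := fun y => w (-y) with hv
  have hvm : Measurable v := hmeas.comp measurable_neg
  have hv1 : Integrable v := ((Measure.measurePreserving_neg (volume : Measure ℝ)).integrable_comp
    hw1.aestronglyMeasurable).mpr hw1
  -- positive side
  have hpos : ∫⁻ x in Set.Ioi (0:ℝ), ENNReal.ofReal ((∫ y in Set.Iic x, w y) ^ 2)
      ≤ 4 * ∫⁻ y in Set.Ioi (0:ℝ), ENNReal.ofReal (y ^ 2 * w y ^ 2) := by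
    refine le_trans (lintegral_mono_ae ((ae_restrict_iff' measurableSet_Ioi).2
      (ae_of_all _ fun x hx => ?_))) (hardy_halfline w hmeas hw1)
    apply ENNReal.ofReal_le_ofReal
    have h0 : (∫ y in Set.Iic x, w y) = - ∫ y in Set.Ioi x, w y := by
      have h := intervalIntegral.integral_Iic_add_Ioi (b := x) hw1.integrableOn hw1.integrableOn
      rw [hmass] at h; linarith
    have h1 : |∫ y in Set.Iic x, w y| ≤ ∫ y in Set.Ioi x, |w y| := by
      rw [h0, abs_neg, ← Real.norm_eq_abs]
      exact (norm_integral_le_integral_norm w).trans (le_of_eq (by simp [Real.norm_eq_abs]))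
    calc (∫ y in Set.Iic x, w y) ^ 2 = |∫ y in Set.Iic x, w y| ^ 2 := (sq_abs _).symm
      _ ≤ (∫ y in Set.Ioi x, |w y|) ^ 2 := pow_le_pow_left₀ (abs_nonneg _) h1 2
  -- negative side
  have hneg : ∫⁻ x in Set.Iio (0:ℝ), ENNReal.ofReal ((∫ y in Set.Iic x, w y) ^ 2)
      ≤ 4 * ∫⁻ y in Set.Iio (0:ℝ), ENNReal.ofReal (y ^ 2 * w y ^ 2) := by
    have hcontabs : Continuous fun x => ∫ y in Set.Iic x, |w y| := cont_Iic _ hw1.abs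
    have e1 : ∫⁻ x in Set.Iio (0:ℝ), ENNReal.ofReal ((∫ y in Set.Iic x, w y) ^ 2)
        = ∫⁻ x in Set.Ioi (0:ℝ), ENNReal.ofReal ((∫ y in Set.Iic (-x), w y) ^ 2) :=
      lintegral_Iio_comp_neg _ ((hΨc.pow 2).measurable.ennreal_ofReal)
    have e2 : ∀ x : ℝ, ENNReal.ofReal ((∫ y in Set.Iic (-x), w y) ^ 2)
        ≤ ENNReal.ofReal ((∫ y in Set.Ioi x, |v y|) ^ 2) := by
      intro x
      apply ENNReal.ofReal_le_ofReal
      have h1 : |∫ y in Set.Iic (-x), w y| ≤ ∫ y in Set.Iic (-x), |w y| := by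
        rw [← Real.norm_eq_abs]
        exact (norm_integral_le_integral_norm w).trans (le_of_eq (by simp [Real.norm_eq_abs]))
      have h2 : (∫ y in Set.Ioi x, |v y|) = ∫ y in Set.Iic (-x), |w y| :=
        integral_comp_neg_Ioi x fun y => |w y|
      calc (∫ y in Set.Iic (-x), w y) ^ 2 = |∫ y in Set.Iic (-x), w y| ^ 2 := (sq_abs _).symm
        _ ≤ (∫ y in Set.Iic (-x), |w y|) ^ 2 := pow_le_pow_left₀ (abs_nonneg _) h1 2
        _ = (∫ y in Set.Ioi x, |v y|) ^ 2 := by rw [h2]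
    have e3 : ∫⁻ x in Set.Ioi (0:ℝ), ENNReal.ofReal ((∫ y in Set.Ioi x, |v y|) ^ 2)
        ≤ 4 * ∫⁻ y in Set.Ioi (0:ℝ), ENNReal.ofReal (y ^ 2 * v y ^ 2) :=
      hardy_halfline v hvm hv1
    have e4 : ∫⁻ y in Set.Ioi (0:ℝ), ENNReal.ofReal (y ^ 2 * v y ^ 2)
        = ∫⁻ y in Set.Iio (0:ℝ), ENNReal.ofReal (y ^ 2 * w y ^ 2) := by
      rw [show (∫⁻ y in Set.Iio (0:ℝ), ENNReal.ofReal (y ^ 2 * w y ^ 2))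
          = ∫⁻ y in Set.Ioi (0:ℝ), ENNReal.ofReal ((-y) ^ 2 * w (-y) ^ 2) from
        lintegral_Iio_comp_neg (fun y => ENNReal.ofReal (y ^ 2 * w y ^ 2))
          (((measurable_id.pow measurable_const).mul
            (hmeas.pow measurable_const)).ennreal_ofReal)]
      refine lintegral_congr fun y => ?_
      rw [hv, neg_sq]
    calc ∫⁻ x in Set.Iio (0:ℝ), ENNReal.ofReal ((∫ y in Set.Iic x, w y) ^ 2)
        = ∫⁻ x in Set.Ioi (0:ℝ), ENNReal.ofReal ((∫ y in Set.Iic (-x), w y) ^ 2) := e1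
      _ ≤ ∫⁻ x in Set.Ioi (0:ℝ), ENNReal.ofReal ((∫ y in Set.Ioi x, |v y|) ^ 2) :=
          lintegral_mono fun x => e2 x
      _ ≤ 4 * ∫⁻ y in Set.Ioi (0:ℝ), ENNReal.ofReal (y ^ 2 * v y ^ 2) := e3
      _ = 4 * ∫⁻ y in Set.Iio (0:ℝ), ENNReal.ofReal (y ^ 2 * w y ^ 2) := by rw [e4]
  -- splitting lemma
  have hsplit : ∀ f : ℝ → ℝ≥0∞,
      ∫⁻ x, f x = (∫⁻ x in Set.Ioi (0:ℝ), f x) + ∫⁻ x in Set.Iio (0:ℝ), f x := by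
    intro f
    rw [← lintegral_add_compl f measurableSet_Ioi, Set.compl_Ioi,
      Measure.restrict_congr_set (Iio_ae_eq_Iic (a := (0:ℝ)))]
  -- total bound
  have key : ∫⁻ x, ENNReal.ofReal ((∫ y in Set.Iic x, w y) ^ 2)
      ≤ ENNReal.ofReal (4 * σ ^ 2) := by
    calc ∫⁻ x, ENNReal.ofReal ((∫ y in Set.Iic x, w y) ^ 2)
        = (∫⁻ x in Set.Ioi (0:ℝ), ENNReal.ofReal ((∫ y in Set.Iic x, w y) ^ 2))
          + ∫⁻ x in Set.Iio (0:ℝ), ENNReal.ofReal ((∫ y in Set.Iic x, w y) ^ 2) := hsplit _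
      _ ≤ (4 * ∫⁻ y in Set.Ioi (0:ℝ), ENNReal.ofReal (y ^ 2 * w y ^ 2))
          + 4 * ∫⁻ y in Set.Iio (0:ℝ), ENNReal.ofReal (y ^ 2 * w y ^ 2) := add_le_add hpos hneg
      _ = 4 * ∫⁻ y, ENNReal.ofReal (y ^ 2 * w y ^ 2) := by rw [hsplit
          (fun y => ENNReal.ofReal (y ^ 2 * w y ^ 2)), mul_add]
      _ = 4 * ENNReal.ofReal (∫ y, y ^ 2 * w y ^ 2) := by
          rw [ofReal_integral_eq_lintegral_ofReal hw2' (ae_of_all _ fun y => by positivity)]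
      _ ≤ 4 * ENNReal.ofReal (σ ^ 2) := by
          exact mul_le_mul_right (ENNReal.ofReal_le_ofReal hmom) 4
      _ = ENNReal.ofReal (4 * σ ^ 2) := by
          rw [ENNReal.ofReal_mul (by norm_num)]; norm_num
  have hint : ∫ x, (∫ y in Set.Iic x, w y) ^ 2
      = (∫⁻ x, ENNReal.ofReal ((∫ y in Set.Iic x, w y) ^ 2)).toReal :=
    integral_eq_lintegral_of_nonneg_ae (ae_of_all _ fun x => sq_nonneg _)
      (hΨc.pow 2).aestronglyMeasurable
  rw [hint]
  calc (∫⁻ x, ENNReal.ofReal ((∫ y in Set.Iic x, w y) ^ 2)).toReal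
      ≤ (ENNReal.ofReal (4 * σ ^ 2)).toReal :=
        ENNReal.toReal_mono ENNReal.ofReal_ne_top key
    _ = 4 * σ ^ 2 := ENNReal.toReal_ofReal (by positivity)
    _ ≤ 8 * σ ^ 2 := by linarith
end

section
/- Let g : [0,T) → [0,∞) be continuous and satisfy g(t) ≤ a(t+1)^{−1/4} + b e^{−2νt} + ε ∫_0^t e^{−2ν(t−s)} g(s) ds for all t ∈ [0,T), with a, b, ν > 0. Then there exists ε₀ > 0 (depending only on ν) and C > 0 such that if 0 < ε < ε₀ then g(t) ≤ C a (t+1)^{−1/4} + C b e^{−νt} for all t ∈ [0,T). -/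
/-!
We prove `g < 2H` for `H(t) = a (t+1)^{-1/4} + b e^{-νt}` by continuous induction: at the
first time this could fail, `g < 2H` holds before it, so the integral term is at most `2ε`
times the convolution of `H` with the kernel `e^{-2ν(t-s)}`. Both summands of `H` decay no
faster than `e^{-νt}`, i.e. `H(s) ≤ (1 + 1/ν) e^{ν(t-s)} H(t)` for `s ≤ t`, so that
convolution is at most `(1 + 1/ν) H(t) / ν`. For `ε < ν / (2(1 + 1/ν))` this gives
`g(t) < H(t) + H(t)`, so the bound never fails.
-/

open Real MeasureTheory intervalIntegral

open Set Filter Topology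

theorem lt_on_Ico_of_forall_Ico_lt_imp_lt {α β : Type*} [ConditionallyCompleteLinearOrder α]
    [TopologicalSpace α] [OrderTopology α] [LinearOrder β] [TopologicalSpace β]
    [OrderClosedTopology β] {f g : α → β} {a b : α}
    (hf : ContinuousOn f (Ico a b)) (hg : ContinuousOn g (Ico a b))
    (hstep : ∀ t ∈ Ico a b, (∀ s ∈ Ico a t, f s < g s) → f t < g t) :
    ∀ t ∈ Ico a b, f t < g t := by
  by_contra! ⟨t, ht, hgf⟩
  set S := {s ∈ Ico a b | g s ≤ f s}
  have hS : S.Nonempty := ⟨t, ht, hgf⟩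
  have hSbdd : BddBelow S := ⟨a, fun s hs => hs.1.1⟩
  have hmem : sInf S ∈ Ico a b :=
    ⟨le_csInf hS fun s hs => hs.1.1, (csInf_le hSbdd ⟨ht, hgf⟩).trans_lt ht.2⟩
  have hlt : f (sInf S) < g (sInf S) := hstep _ hmem fun s hs => not_le.1 fun hle =>
    (csInf_le hSbdd ⟨⟨hs.1, hs.2.trans hmem.2⟩, hle⟩).not_gt hs.2
  have : (𝓝[S] sInf S).NeBot :=
    mem_closure_iff_nhdsWithin_neBot.1 (csInf_mem_closure hS hSbdd)
  have hSsub : 𝓝[S] sInf S ≤ 𝓝[Ico a b] sInf S := nhdsWithin_mono _ (sep_subset _ _)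
  obtain ⟨s, hlt_s, hs⟩ := (((hf _ hmem).mono_left hSsub).eventually_lt
    ((hg _ hmem).mono_left hSsub) hlt |>.and self_mem_nhdsWithin).exists
  exact hlt_s.not_ge hs.2

theorem integral_exp_neg_mul_sub (t₀ t : ℝ) {c : ℝ} (hc : c ≠ 0) :
    ∫ s in t₀..t, exp (-c * (t - s)) = (1 - exp (-c * (t - t₀))) / c := by
  have hderiv : ∀ s ∈ uIcc t₀ t,
      HasDerivAt (fun s => exp (-c * (t - s)) / c) (exp (-c * (t - s))) s := fun s _ =>
    ((((hasDerivAt_id' s).const_sub t).const_mul (-c)).exp.div_const c).congr_deriv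
      (by field_simp)
  rw [integral_eq_sub_of_hasDerivAt hderiv (Continuous.intervalIntegrable (by fun_prop) _ _)]
  simp only [sub_self, mul_zero, exp_zero]
  ring

theorem integral_exp_neg_mul_sub_mul_le {w : ℝ → ℝ} {t₀ t κ μ C : ℝ} (ht : t₀ ≤ t)
    (hμκ : μ < κ) (hw : IntervalIntegrable w volume t₀ t) (hCw : 0 ≤ C * w t)
    (hbound : ∀ s ∈ Icc t₀ t, w s ≤ C * exp (μ * (t - s)) * w t) :
    ∫ s in t₀..t, exp (-κ * (t - s)) * w s ≤ C * w t / (κ - μ) := by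
  have hκμ : 0 < κ - μ := sub_pos.2 hμκ
  calc ∫ s in t₀..t, exp (-κ * (t - s)) * w s
      ≤ ∫ s in t₀..t, C * w t * exp (-(κ - μ) * (t - s)) := by
        refine integral_mono_on ht (hw.continuousOn_mul (by fun_prop))
          (Continuous.intervalIntegrable (by fun_prop) _ _) fun s hs => ?_
        have hsplit : exp (-(κ - μ) * (t - s)) = exp (-κ * (t - s)) * exp (μ * (t - s)) := by
          rw [← exp_add]; ring_nf
        rw [hsplit]
        nlinarith [hbound s hs, exp_pos (-κ * (t - s))]
    _ = C * w t * ((1 - exp (-(κ - μ) * (t - t₀))) / (κ - μ)) := by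
        rw [intervalIntegral.integral_const_mul, integral_exp_neg_mul_sub t₀ t hκμ.ne']
    _ ≤ C * w t / (κ - μ) := by
        rw [mul_div_assoc']
        refine div_le_div_of_nonneg_right (mul_le_of_le_one_right hCw ?_) hκμ.le
        linarith [exp_pos (-(κ - μ) * (t - t₀))]

theorem add_one_rpow_neg_le_mul_exp {p ν s t : ℝ} (hp : p ≤ 1) (hν : 0 < ν)
    (hs : 0 ≤ s) (hst : s ≤ t) :
    (s + 1) ^ (-p) ≤ (1 + 1 / ν) * exp (ν * (t - s)) * (t + 1) ^ (-p) := by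
  have hs1 : 0 < s + 1 := by linarith
  have hratio : 1 ≤ (t + 1) / (s + 1) := by rw [one_le_div hs1]; linarith
  have hratio_le : (t + 1) / (s + 1) ≤ (1 + 1 / ν) * exp (ν * (t - s)) := calc
    (t + 1) / (s + 1) ≤ 1 + (t - s) := by rw [div_le_iff₀ hs1]; nlinarith
    _ ≤ (1 + 1 / ν) * (ν * (t - s) + 1) := by
        have : (1 + 1 / ν) * (ν * (t - s) + 1) = 1 + (t - s) + (ν * (t - s) + 1 / ν) := by
          field_simp; ring
        have := mul_nonneg hν.le (sub_nonneg.2 hst)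
        have : 0 < 1 / ν := by positivity
        linarith
    _ ≤ (1 + 1 / ν) * exp (ν * (t - s)) := by gcongr; exact add_one_le_exp _
  have ht1 : 0 < (t + 1) ^ p := rpow_pos_of_pos (by linarith) p
  have ht1' : 0 ≤ (t + 1) ^ (-p) := (rpow_pos_of_pos (by linarith) _).le
  calc (s + 1) ^ (-p) = ((t + 1) / (s + 1)) ^ p * (t + 1) ^ (-p) := by
        rw [div_rpow (by linarith) hs1.le, rpow_neg hs1.le, rpow_neg (by linarith)]
        field_simp
    _ ≤ (t + 1) / (s + 1) * (t + 1) ^ (-p) :=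
        mul_le_mul_of_nonneg_right (rpow_le_self_of_one_le hratio hp) ht1'
    _ ≤ (1 + 1 / ν) * exp (ν * (t - s)) * (t + 1) ^ (-p) :=
        mul_le_mul_of_nonneg_right hratio_le ht1'

noncomputable def decayWeight (p a b ν t : ℝ) : ℝ := a * (t + 1) ^ (-p) + b * exp (-ν * t)

section decayWeight

variable {p a b ν : ℝ}

theorem continuousOn_decayWeight : ContinuousOn (decayWeight p a b ν) (Ici 0) :=
  (continuousOn_const.mul ((continuousOn_id.add continuousOn_const).rpow_const
    fun s hs => Or.inl (by linarith [mem_Ici.1 hs] : (0 : ℝ) < s + 1).ne')).add (by fun_prop)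

theorem decayWeight_nonneg (ha : 0 ≤ a) (hb : 0 ≤ b) {t : ℝ} (ht : 0 ≤ t) :
    0 ≤ decayWeight p a b ν t := by
  have : 0 ≤ (t + 1) ^ (-p) := rpow_nonneg (by linarith) _
  unfold decayWeight
  positivity

theorem decayWeight_pos (ha : 0 ≤ a) (hb : 0 < b) {t : ℝ} (ht : 0 ≤ t) :
    0 < decayWeight p a b ν t := by
  have : 0 < (t + 1) ^ (-p) := rpow_pos_of_pos (by linarith) _
  unfold decayWeight
  positivity

theorem decayWeight_le_mul_exp (hp : p ≤ 1) (hν : 0 < ν) (ha : 0 ≤ a) (hb : 0 ≤ b)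
    {s t : ℝ} (hs : 0 ≤ s) (hst : s ≤ t) :
    decayWeight p a b ν s ≤ (1 + 1 / ν) * exp (ν * (t - s)) * decayWeight p a b ν t := by
  have hC : 1 ≤ 1 + 1 / ν := le_add_of_nonneg_right (by positivity)
  have hpow := add_one_rpow_neg_le_mul_exp hp hν hs hst
  have hexp : exp (-ν * s) = exp (ν * (t - s)) * exp (-ν * t) := by rw [← exp_add]; ring_nf
  calc decayWeight p a b ν s
        = a * (s + 1) ^ (-p) + b * (exp (ν * (t - s)) * exp (-ν * t)) := by rw [← hexp]; rfl
    _ ≤ a * ((1 + 1 / ν) * exp (ν * (t - s)) * (t + 1) ^ (-p))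
        + b * ((1 + 1 / ν) * exp (ν * (t - s)) * exp (-ν * t)) := by
        gcongr
        exact le_mul_of_one_le_left (exp_pos _).le hC
    _ = (1 + 1 / ν) * exp (ν * (t - s)) * decayWeight p a b ν t := by
        unfold decayWeight; ring

theorem integral_exp_neg_mul_sub_mul_le_of_lt_two_mul_decayWeight {g : ℝ → ℝ} {t : ℝ}
    (hp : p ≤ 1) (hν : 0 < ν) (ha : 0 ≤ a) (hb : 0 ≤ b) (ht : 0 ≤ t)
    (hg : ContinuousOn g (Icc 0 t))
    (hlt : ∀ s ∈ Ico 0 t, g s < 2 * decayWeight p a b ν s) :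
    ∫ s in (0 : ℝ)..t, exp (-2 * ν * (t - s)) * g s
      ≤ 2 * (1 + 1 / ν) / ν * decayWeight p a b ν t := by
  have hIcc : uIcc 0 t ⊆ Ici 0 := by rw [uIcc_of_le ht]; exact Icc_subset_Ici_self
  have hw : IntervalIntegrable (fun s => 2 * decayWeight p a b ν s) volume 0 t :=
    (continuousOn_const.mul (continuousOn_decayWeight.mono hIcc)).intervalIntegrable
  have hmono : ∫ s in (0 : ℝ)..t, exp (-2 * ν * (t - s)) * g s
      ≤ ∫ s in (0 : ℝ)..t, exp (-(2 * ν) * (t - s)) * (2 * decayWeight p a b ν s) := by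
    refine integral_mono_on_of_le_Ioo ht
      ((hg.mono (uIcc_of_le ht).subset).intervalIntegrable.continuousOn_mul (by fun_prop))
      (hw.continuousOn_mul (by fun_prop)) fun s hs => ?_
    rw [show -2 * ν = -(2 * ν) by ring]
    exact mul_le_mul_of_nonneg_left (hlt s ⟨hs.1.le, hs.2⟩).le (exp_pos _).le
  have hkernel := integral_exp_neg_mul_sub_mul_le (C := 1 + 1 / ν) ht
    (by linarith : ν < 2 * ν) hw
    (by have := decayWeight_nonneg (p := p) (ν := ν) ha hb ht; positivity)
    fun s hs => by have := decayWeight_le_mul_exp hp hν ha hb hs.1 hs.2; linarith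
  calc _ ≤ _ := hmono.trans hkernel
    _ = 2 * (1 + 1 / ν) / ν * decayWeight p a b ν t := by
      rw [show 2 * ν - ν = ν by ring]; ring

end decayWeight

/-- Gronwall-type integral inequality with exponentially decaying kernel: if
`g(t) ≤ a(t+1)^{−1/4} + b e^{−2νt} + ε ∫_0^t e^{−2ν(t−s)} g(s) ds` on `[0,T)`, then for
`ε` small enough (depending only on `ν`) one has `g(t) ≤ C a (t+1)^{−1/4} + C b e^{−νt}`. -/
theorem gronwall_exponential_kernel (ν : ℝ) (hν : 0 < ν) :
    ∃ ε₀ > (0 : ℝ), ∃ C > (0 : ℝ), ∀ (T a b ε : ℝ) (g : ℝ → ℝ),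
      0 < a → 0 < b → 0 < ε → ε < ε₀ →
      ContinuousOn g (Set.Ico 0 T) →
      (∀ t ∈ Set.Ico (0 : ℝ) T, 0 ≤ g t) →
      (∀ t ∈ Set.Ico (0 : ℝ) T,
        g t ≤ a * (t + 1) ^ (-(1/4) : ℝ) + b * Real.exp (-2 * ν * t)
          + ε * ∫ s in (0 : ℝ)..t, Real.exp (-2 * ν * (t - s)) * g s) →
      ∀ t ∈ Set.Ico (0 : ℝ) T,
        g t ≤ C * a * (t + 1) ^ (-(1/4) : ℝ) + C * b * Real.exp (-ν * t) := by
  refine ⟨ν / (2 * (1 + 1 / ν)), by positivity, 2, two_pos, ?_⟩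
  intro T a b ε g ha hb hε hεε₀ hg _ hineq
  have hεK : ε * (2 * (1 + 1 / ν) / ν) < 1 := by
    rw [lt_div_iff₀ (by positivity)] at hεε₀
    rw [mul_div_assoc', div_lt_one hν]; linarith
  have key : ∀ t ∈ Ico 0 T, g t < 2 * decayWeight (1/4) a b ν t := by
    refine lt_on_Ico_of_forall_Ico_lt_imp_lt hg
      (continuousOn_const.mul (continuousOn_decayWeight.mono Ico_subset_Ici_self))
      fun t ht hlt => ?_
    have hint := integral_exp_neg_mul_sub_mul_le_of_lt_two_mul_decayWeight (by norm_num) hν ha.le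
      hb.le ht.1 (hg.mono (Icc_subset_Ico_right ht.2)) hlt
    have hdecay : exp (-2 * ν * t) ≤ exp (-ν * t) := exp_le_exp.2 (by nlinarith [ht.1])
    have hpos := decayWeight_pos (p := 1/4) (ν := ν) ha.le hb ht.1
    calc g t ≤ a * (t + 1) ^ (-(1/4) : ℝ) + b * exp (-2 * ν * t)
          + ε * ∫ s in (0 : ℝ)..t, exp (-2 * ν * (t - s)) * g s := hineq t ht
      _ ≤ decayWeight (1/4) a b ν t
          + ε * (2 * (1 + 1 / ν) / ν * decayWeight (1/4) a b ν t) := by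
          unfold decayWeight at hint ⊢
          gcongr
      _ < 2 * decayWeight (1/4) a b ν t := by nlinarith
  intro t ht
  have := key t ht
  unfold decayWeight at this
  linarith
end

section
/- Smooth solutions (w₁,w₂) of w₁_t + w₂_x + θ_t = 0, w₂_t + ((w₁+θ)(1+w₂))_x = −(1+w₂)w₂ (with θ solving the heat equation θ_t = θ_{xx} and 1+w₂ > 0) satisfy the relative entropy identity: [½w₁² + (1+w₂)ln(1+w₂) − w₂ + θ_x w₂]_t + [(θ+w₁)(1+w₂)ln(1+w₂) − θw₂ + θ_x w₁ + θ_x(θ+w₁)w₂]_x + w₂(1+w₂)ln(1+w₂) + 2θ_x w₂ + θ_x² = θ_{xt}w₂ − θ_x w₂² + θ_{xx}(θ+w₁)w₂. -/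
open Real

/-- Partial derivative with respect to the second (time) variable. -/
noncomputable def pt (f : ℝ → ℝ → ℝ) (x t : ℝ) : ℝ := deriv (fun s => f x s) t

/-- Partial derivative with respect to the first (space) variable. -/
noncomputable def px (f : ℝ → ℝ → ℝ) (x t : ℝ) : ℝ := deriv (fun y => f y t) x

/-- Relative entropy identity for smooth solutions of the perturbed system
`w₁_t + w₂_x + θ_t = 0`, `w₂_t + ((w₁+θ)(1+w₂))_x = −(1+w₂)w₂`, with `θ_t = θ_{xx}`. -/
theorem relative_entropy_identity (w1 w2 θ : ℝ → ℝ → ℝ)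
    (hw1 : ContDiff ℝ 2 (fun p : ℝ × ℝ => w1 p.1 p.2))
    (hw2 : ContDiff ℝ 2 (fun p : ℝ × ℝ => w2 p.1 p.2))
    (hθs : ContDiff ℝ 2 (fun p : ℝ × ℝ => θ p.1 p.2))
    (hpos : ∀ x t : ℝ, 0 < 1 + w2 x t)
    (hheat : ∀ x t : ℝ, pt θ x t = px (px θ) x t)
    (heq1 : ∀ x t : ℝ, pt w1 x t + px w2 x t + pt θ x t = 0)
    (heq2 : ∀ x t : ℝ,
      pt w2 x t + px (fun y s => (w1 y s + θ y s) * (1 + w2 y s)) x t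
        = -(1 + w2 x t) * w2 x t) :
    ∀ x t : ℝ,
      pt (fun y s => (1/2) * (w1 y s) ^ 2 + (1 + w2 y s) * Real.log (1 + w2 y s)
        - w2 y s + px θ y s * w2 y s) x t
      + px (fun y s => (θ y s + w1 y s) * (1 + w2 y s) * Real.log (1 + w2 y s)
        - θ y s * w2 y s + px θ y s * w1 y s + px θ y s * (θ y s + w1 y s) * w2 y s) x t
      + w2 x t * (1 + w2 x t) * Real.log (1 + w2 x t)
      + 2 * px θ x t * w2 x t + (px θ x t) ^ 2
      = pt (px θ) x t * w2 x t - px θ x t * (w2 x t) ^ 2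
        + px (px θ) x t * (θ x t + w1 x t) * w2 x t := by
  have sliceT : ∀ (f : ℝ × ℝ → ℝ), Differentiable ℝ f → ∀ x t : ℝ,
      DifferentiableAt ℝ (fun s => f (x, s)) t := fun f hf x t =>
    (hf.differentiableAt).comp t (DifferentiableAt.prodMk (differentiableAt_const x) differentiableAt_id)
  have sliceX : ∀ (f : ℝ × ℝ → ℝ), Differentiable ℝ f → ∀ x t : ℝ,
      DifferentiableAt ℝ (fun y => f (y, t)) x := fun f hf x t =>
    (hf.differentiableAt).comp x (DifferentiableAt.prodMk differentiableAt_id (differentiableAt_const t))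
  have hw1d := hw1.differentiable two_ne_zero
  have hw2d := hw2.differentiable two_ne_zero
  have hθd := hθs.differentiable two_ne_zero
  have hgC : ContDiff ℝ 1 (fun p : ℝ × ℝ => fderiv ℝ (fun q : ℝ × ℝ => θ q.1 q.2) p (1, 0)) :=
    (ContinuousLinearMap.apply ℝ ℝ ((1 : ℝ), (0 : ℝ))).contDiff.comp
      (hθs.fderiv_right (by norm_num))
  have hpx : ∀ y s : ℝ, px θ y s = fderiv ℝ (fun q : ℝ × ℝ => θ q.1 q.2) (y, s) (1, 0) := by
    intro y s
    have hc : HasDerivAt (fun z : ℝ => (z, s)) ((1 : ℝ), (0 : ℝ)) y :=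
      (hasDerivAt_id y).prodMk (hasDerivAt_const y s)
    have hFd := (hθd (y, s)).hasFDerivAt
    exact (hFd.comp_hasDerivAt y hc).deriv
  have hgd := hgC.differentiable one_ne_zero
  intro x t
  have hne : (1 : ℝ) + w2 x t ≠ 0 := (hpos x t).ne'
  have Hw1t : HasDerivAt (fun s => w1 x s) (pt w1 x t) t := (sliceT _ hw1d x t).hasDerivAt
  have Hw2t : HasDerivAt (fun s => w2 x s) (pt w2 x t) t := (sliceT _ hw2d x t).hasDerivAt
  have Hqt : HasDerivAt (fun s => px θ x s) (pt (px θ) x t) t := by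
    have hfe : (fun s => px θ x s)
        = fun s => fderiv ℝ (fun q : ℝ × ℝ => θ q.1 q.2) (x, s) (1, 0) :=
      funext fun s => hpx x s
    have hd : DifferentiableAt ℝ (fun s => px θ x s) t := by
      rw [hfe]; exact sliceT _ hgd x t
    exact hd.hasDerivAt
  have Hw1x : HasDerivAt (fun y => w1 y t) (px w1 x t) x := (sliceX _ hw1d x t).hasDerivAt
  have Hw2x : HasDerivAt (fun y => w2 y t) (px w2 x t) x := (sliceX _ hw2d x t).hasDerivAt
  have Hθx : HasDerivAt (fun y => θ y t) (px θ x t) x := (sliceX _ hθd x t).hasDerivAt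
  have Hqx : HasDerivAt (fun y => px θ y t) (px (px θ) x t) x := by
    have hfe : (fun y => px θ y t)
        = fun y => fderiv ℝ (fun q : ℝ × ℝ => θ q.1 q.2) (y, t) (1, 0) :=
      funext fun y => hpx y t
    have hd : DifferentiableAt ℝ (fun y => px θ y t) x := by
      rw [hfe]; exact sliceX _ hgd x t
    exact hd.hasDerivAt
  have Hlogt : HasDerivAt (fun s => Real.log (1 + w2 x s)) (pt w2 x t / (1 + w2 x t)) t :=
    (Hw2t.const_add 1).log hne
  have Hlogx : HasDerivAt (fun y => Real.log (1 + w2 y t)) (px w2 x t / (1 + w2 x t)) x :=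
    (Hw2x.const_add 1).log hne
  have HE1 := ((((Hw1t.pow 2).const_mul (1/2 : ℝ)).add
      ((Hw2t.const_add 1).mul Hlogt)).sub Hw2t).add (Hqt.mul Hw2t)
  have e1 : pt (fun y s => (1/2) * (w1 y s) ^ 2 + (1 + w2 y s) * Real.log (1 + w2 y s)
      - w2 y s + px θ y s * w2 y s) x t = _ := HE1.deriv
  have HE2 := (((((Hθx.add Hw1x).mul (Hw2x.const_add 1)).mul Hlogx).sub
      (Hθx.mul Hw2x)).add (Hqx.mul Hw1x)).add ((Hqx.mul (Hθx.add Hw1x)).mul Hw2x)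
  have e2 : px (fun y s => (θ y s + w1 y s) * (1 + w2 y s) * Real.log (1 + w2 y s)
      - θ y s * w2 y s + px θ y s * w1 y s + px θ y s * (θ y s + w1 y s) * w2 y s) x t = _ :=
    HE2.deriv
  have e0 : px (fun y s => (w1 y s + θ y s) * (1 + w2 y s)) x t = _ :=
    ((Hw1x.add Hθx).mul (Hw2x.const_add 1)).deriv
  have h1 := heq1 x t
  have h2 := heq2 x t
  rw [e0] at h2
  have hh := hheat x t
  have c1 : (1 + w2 x t) * (pt w2 x t / (1 + w2 x t)) = pt w2 x t := by
    field_simp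
  have c2 : (θ x t + w1 x t) * (1 + w2 x t) * (px w2 x t / (1 + w2 x t))
      = (θ x t + w1 x t) * px w2 x t := by
    field_simp
  rw [e1, e2, c1]
  simp only [Pi.add_apply, Pi.mul_apply] at h2 ⊢
  rw [c2]
  linear_combination (Real.log (1 + w2 x t) + px θ x t) * h2 + w1 x t * h1 - w1 x t * hh
end
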